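/- Let φ: {0,1}* → {0,1}* be a primitive morphism which is conjugated to a morphism in Class P_ret (i.e., there exist a morphism ψ in Class P_ret and a word x with ψ(a)x = xφ(a) for every letter a, or φ(a)x = xψ(a) for every letter a). If u ∈ {0,1}^ℕ is a fixed point of φ, i.e., φ(u) = u, then the language L(u) is closed under reversal. -/

import Mathlib

open List

/-- Apply a morphism (given by its values on letters) to a finite word. -/
def applyM {A : Type*} (φ : A → List A) (v : List A) : List A := v.flatMap φ

/-- The set of occurrences of `w` as a factor of `u`:
indices `i` such that the block of `u` of length `|w|` starting at `i` equals `w`. -/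
def occs {A : Type*} [DecidableEq A] (w u : List A) : Finset ℕ :=
  (Finset.range (u.length + 1)).filter
    (fun i => i + w.length ≤ u.length ∧ (u.drop i).take w.length = w)

/-- A morphism `φ` belongs to Class `P_ret` with marker `w` if it is injective on
letters, `w` is a palindrome, and for each letter `a` the word `φ(a)w` is a palindrome
in which `w` occurs exactly twice, namely as a prefix (position `0`) and as a suffix
(position `|φ(a)|`, distinct from `0`). -/
def IsPretWithMarker {A : Type*} [DecidableEq A] (φ : A → List A) (w : List A) : Prop :=
  Function.Injective φ ∧ w.reverse = w ∧
    ∀ a : A, (φ a ++ w).reverse = φ a ++ w ∧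
      occs w (φ a ++ w) = {0, (φ a).length} ∧ (φ a).length ≠ 0

/-- The block of length `len` of the infinite word `u` starting at position `i`. -/
def factorAt {A : Type*} (u : ℕ → A) (i len : ℕ) : List A :=
  (List.range len).map fun k => u (i + k)

/-- `i` is an occurrence of the finite word `v` in the infinite word `u`. -/
def OccursAt {A : Type*} (u : ℕ → A) (v : List A) (i : ℕ) : Prop :=
  factorAt u i v.length = v

/-- `v` belongs to the language of the infinite word `u`, i.e. `v` is a factor of `u`. -/
def InLang {A : Type*} (u : ℕ → A) (v : List A) : Prop := ∃ i, OccursAt u v i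

/-- The image `φ(u) = φ(u₀)φ(u₁)φ(u₂)⋯` of an infinite word `u` under a
(non-erasing) morphism `φ`, as an infinite word. -/
def applyInf {A : Type*} (φ : A → List A) (u : ℕ → A) (n : ℕ) : A :=
  (((List.range (n + 1)).flatMap fun i => φ (u i))).getD n (u 0)

/-- The language of `u` is closed under reversal. -/
def ClosedUnderReversal {A : Type*} (u : ℕ → A) : Prop :=
  ∀ v : List A, InLang u v → InLang u v.reverse

/-- A finite word is rich if its number of palindromic factors (including `ε`)
equals its length plus one. -/
def RichWord {A : Type*} (u : List A) : Prop :=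
  {p : List A | p <:+: u ∧ p.reverse = p}.ncard = u.length + 1

/-- An infinite word is rich if all its finite prefixes are rich. -/
def RichInf {A : Type*} (u : ℕ → A) : Prop := ∀ n : ℕ, RichWord (factorAt u 0 n)

/-- An infinite word is recurrent if each of its factors occurs infinitely often. -/
def Recurrent {A : Type*} (u : ℕ → A) : Prop :=
  ∀ v : List A, InLang u v → ∀ N : ℕ, ∃ i, N ≤ i ∧ OccursAt u v i

/-- `r` is a return word to `w` in the infinite word `u`: `wr ∈ L(u)` and `w`
occurs in `wr` exactly twice, as a prefix and as a suffix. -/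
def IsReturnWord {A : Type*} [DecidableEq A] (u : ℕ → A) (w r : List A) : Prop :=
  r ≠ [] ∧ InLang u (w ++ r) ∧ occs w (w ++ r) = {0, r.length}

/-- Left extensions of `x` in the language of `u`. -/
def leftExt {A : Type*} (u : ℕ → A) (x : List A) : Set A := {a | InLang u (a :: x)}

/-- Right extensions of `x` in the language of `u`. -/
def rightExt {A : Type*} (u : ℕ → A) (x : List A) : Set A := {b | InLang u (x ++ [b])}

/-- Bi-extensions of `x` in the language of `u`. -/
def biExt {A : Type*} (u : ℕ → A) (x : List A) : Set (A × A) :=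
  {p | InLang u (p.1 :: (x ++ [p.2]))}

/-- `x` is bispecial in `u`. -/
def Bispecial {A : Type*} (u : ℕ → A) (x : List A) : Prop :=
  2 ≤ (leftExt u x).ncard ∧ 2 ≤ (rightExt u x).ncard

/-- The bilateral order `b_u(x) = #B_u(x) − #L_u(x) − #R_u(x) + 1`. -/
noncomputable def bilateralOrder {A : Type*} (u : ℕ → A) (x : List A) : ℤ :=
  ((biExt u x).ncard : ℤ) - (leftExt u x).ncard - (rightExt u x).ncard + 1

/-- The number of palindromic extensions of `x` in `u`. -/
noncomputable def pext {A : Type*} (u : ℕ → A) (x : List A) : ℕ :=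
  {a | InLang u (a :: (x ++ [a]))}.ncard

/-- Arnoux-Rauzy morphisms: the monoid of morphisms generated by permutations of the
alphabet and by the elementary morphisms `ψ_a : a ↦ a, b ↦ ab` and `ψ̄_a : a ↦ a, b ↦ ba`. -/
inductive IsAR {A : Type*} [DecidableEq A] : (A → List A) → Prop
  | perm (π : Equiv.Perm A) : IsAR (fun a => [π a])
  | psiL (a : A) : IsAR (fun b => if b = a then [a] else [a, b])
  | psiR (a : A) : IsAR (fun b => if b = a then [a] else [b, a])
  | comp {φ ψ : A → List A} : IsAR φ → IsAR ψ → IsAR (fun a => applyM φ (ψ a))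

/-- The `k`-th power `φ^k` of a morphism. -/
def powM {A : Type*} (φ : A → List A) : ℕ → A → List A
  | 0, a => [a]
  | n + 1, a => applyM (powM φ n) (φ a)

/-- A morphism is primitive if some power of it maps every letter to a word
containing every letter. -/
def PrimitiveM {A : Type*} (φ : A → List A) : Prop :=
  ∃ k : ℕ, ∀ a b : A, b ∈ powM φ k a

/-- A (acyclic) morphism is marked: it has a rightmost conjugate `φR` whose
last-letter map is injective, and a leftmost conjugate `φL` whose first-letter map
is injective. -/
def Marked {A : Type*} (φ : A → List A) : Prop :=
  ∃ (φR φL : A → List A) (x y : List A),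
    (∀ a, φ a ++ x = x ++ φR a) ∧
    (∀ a, φL a ++ y = y ++ φ a) ∧
    (∃ a b : A, (φR a).getLast? ≠ (φR b).getLast?) ∧
    (∃ a b : A, (φL a).head? ≠ (φL b).head?) ∧
    Function.Injective (fun c => (φR c).getLast?) ∧
    Function.Injective (fun c => (φL c).head?)

/-! A primitive fixed point `u` is uniformly recurrent, so every factor of `u` lies in every
long enough factor of `u`, and it suffices to find arbitrarily long palindromes in `L(u)`.
The conjugacy between `φ` and `ψ` makes `L(u)` closed under `ψ`, and the marker `w` satisfies
`ψ(a) w = w ψ(a)ᴿ`, so `P ↦ ψ(P) w` sends palindromes of `L(u)` to palindromes of `L(u)`.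
Iterating from a letter `a` yields palindromes with prefix `ψⁿ(a)`, a rearrangement of `φⁿ(a)`,
hence of unbounded length. -/

open Function

section Morphism

variable {A : Type*}

@[simp]
lemma applyM_nil (φ : A → List A) : applyM φ [] = [] := rfl

@[simp]
lemma applyM_cons (φ : A → List A) (a : A) (v : List A) :
    applyM φ (a :: v) = φ a ++ applyM φ v := rfl

@[simp]
lemma applyM_append (φ : A → List A) (v v' : List A) :
    applyM φ (v ++ v') = applyM φ v ++ applyM φ v' := flatMap_append

@[simp]
lemma applyM_singleton (φ : A → List A) (a : A) : applyM φ [a] = φ a := by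
  simp [applyM]

lemma applyM_powM (φ : A → List A) (n : ℕ) : applyM (powM φ n) = (applyM φ)^[n] := by
  induction n with
  | zero => funext v; exact flatMap_singleton' v
  | succ n ih =>
    funext v
    rw [iterate_succ_apply, ← ih]
    exact flatMap_assoc.symm

lemma powM_eq_iterate (φ : A → List A) (n : ℕ) (a : A) : powM φ n a = (applyM φ)^[n] [a] := by
  rw [← applyM_powM, applyM_singleton]

lemma iterate_applyM_append (φ : A → List A) (n : ℕ) (v v' : List A) :
    (applyM φ)^[n] (v ++ v') = (applyM φ)^[n] v ++ (applyM φ)^[n] v' := by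
  rw [← applyM_powM, applyM_append]

lemma List.IsInfix.iterate_applyM {v v' : List A} (h : v <:+: v') (φ : A → List A) (n : ℕ) :
    (applyM φ)^[n] v <:+: (applyM φ)^[n] v' := by
  rw [← applyM_powM]
  exact h.flatMap _

lemma mul_length_le_length_applyM {φ : A → List A} {c : ℕ} (h : ∀ a, c ≤ (φ a).length)
    (v : List A) : c * v.length ≤ (applyM φ v).length := by
  induction v with
  | nil => simp
  | cons a v ih =>
    simp only [applyM_cons, length_cons, length_append, mul_add, mul_one]
    linarith [h a]

lemma length_le_length_applyM {φ : A → List A} (hφ : ∀ a, φ a ≠ []) (v : List A) :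
    v.length ≤ (applyM φ v).length := by
  simpa using mul_length_le_length_applyM (fun a => length_pos_iff.mpr (hφ a)) v

lemma length_le_length_iterate_applyM {φ : A → List A} (hφ : ∀ a, φ a ≠ []) (n : ℕ)
    (v : List A) : v.length ≤ ((applyM φ)^[n] v).length := by
  induction n with
  | zero => rfl
  | succ n ih => exact ih.trans (by rw [iterate_succ_apply']; exact length_le_length_applyM hφ _)

lemma applyM_append_eq_append {φ ψ : A → List A} {x : List A} (h : ∀ a, φ a ++ x = x ++ ψ a)
    (v : List A) : applyM φ v ++ x = x ++ applyM ψ v := by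
  induction v with
  | nil => simp
  | cons a v ih => rw [applyM_cons, append_assoc, ih, ← append_assoc, h, append_assoc, applyM_cons]

lemma List.perm_of_append_eq_append {l₁ l₂ x : List A} (h : l₁ ++ x = x ++ l₂) : l₁ ~ l₂ :=
  (perm_append_right_iff x).mp (by rw [h]; exact perm_append_comm)

lemma List.prefix_of_append_eq_append {l r x : List A} (h : r ++ x = x ++ l)
    (hx : x.length ≤ r.length) : x <+: r :=
  prefix_of_prefix_length_le (h ▸ prefix_append x l) (prefix_append r x) hx

lemma List.suffix_of_append_eq_append {l r x : List A} (h : l ++ x = x ++ r)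
    (hx : x.length ≤ r.length) : x <:+ r :=
  suffix_of_suffix_length_le (h ▸ suffix_append l x) (suffix_append x r) hx

lemma iterate_applyM_perm {φ ψ : A → List A} (h : ∀ a, ψ a ~ φ a) (n : ℕ) (v : List A) :
    (applyM ψ)^[n] v ~ (applyM φ)^[n] v := by
  induction n with
  | zero => rfl
  | succ n ih =>
    rw [iterate_succ_apply', iterate_succ_apply']
    exact ih.flatMap fun a _ => h a

end Morphism

section InfiniteWord

variable {A : Type*} (u : ℕ → A)

@[simp]
lemma length_factorAt (i n : ℕ) : (factorAt u i n).length = n := by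
  simp [factorAt]

@[simp]
lemma getElem_factorAt (i n k : ℕ) (h : k < (factorAt u i n).length) :
    (factorAt u i n)[k] = u (i + k) := by
  simp [factorAt]

lemma factorAt_one (i : ℕ) : factorAt u i 1 = [u i] := by
  simp [factorAt]

lemma factorAt_add (i m n : ℕ) :
    factorAt u i (m + n) = factorAt u i m ++ factorAt u (i + m) n := by
  simp [factorAt, range_add, add_assoc]

lemma factorAt_prefix_factorAt (i : ℕ) {m n : ℕ} (h : m ≤ n) :
    factorAt u i m <+: factorAt u i n := by
  obtain ⟨k, rfl⟩ := Nat.exists_eq_add_of_le h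
  rw [factorAt_add]
  exact prefix_append _ _

lemma factorAt_infix_factorAt {i j m L : ℕ} (hij : i ≤ j) (hL : j + m ≤ i + L) :
    factorAt u j m <:+: factorAt u i L := by
  obtain ⟨a, rfl⟩ := Nat.exists_eq_add_of_le hij
  obtain ⟨b, rfl⟩ : ∃ b, L = a + m + b := ⟨L - (a + m), by omega⟩
  rw [factorAt_add, factorAt_add]
  exact ⟨_, _, rfl⟩

lemma occursAt_factorAt (i n : ℕ) : OccursAt u (factorAt u i n) i := by
  simp [OccursAt]

lemma OccursAt.append {u : ℕ → A} {v v' : List A} {i : ℕ} (h : OccursAt u v i)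
    (h' : OccursAt u v' (i + v.length)) : OccursAt u (v ++ v') i := by
  rw [OccursAt, length_append, factorAt_add, h, h']

lemma OccursAt.prefix_of_length_le {u : ℕ → A} {p q : List A} (hp : OccursAt u p 0)
    (hq : OccursAt u q 0) (h : p.length ≤ q.length) : p <+: q := by
  rw [← hp, ← hq]
  exact factorAt_prefix_factorAt u 0 h

lemma exists_occursAt_of_infix_factorAt {v : List A} {i L : ℕ} (h : v <:+: factorAt u i L) :
    ∃ j, i ≤ j ∧ OccursAt u v j := by
  obtain ⟨s, t, hst⟩ := h
  have hL : L = s.length + v.length + t.length := by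
    have := congrArg length hst
    simp only [length_append, length_factorAt] at this
    omega
  rw [hL, factorAt_add, factorAt_add] at hst
  have hsv := (append_inj hst (by simp)).1
  exact ⟨i + s.length, le_add_right le_rfl, ((append_inj hsv (by simp)).2).symm⟩

lemma InLang.of_infix {u : ℕ → A} {q v : List A} (hq : InLang u q) (h : v <:+: q) :
    InLang u v := by
  obtain ⟨i, hi⟩ := hq
  obtain ⟨j, -, hj⟩ := exists_occursAt_of_infix_factorAt u (by rwa [hi] : v <:+: factorAt u i _)
  exact ⟨j, hj⟩

lemma InLang.exists_infix_factorAt_zero {u : ℕ → A} {v : List A} (hv : InLang u v) :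
    ∃ m, v <:+: factorAt u 0 m := by
  obtain ⟨i, hi⟩ := hv
  have h := factorAt_infix_factorAt u (Nat.zero_le i) (m := v.length) (L := i + v.length) (by omega)
  rw [hi] at h
  exact ⟨_, h⟩

lemma InLang.exists_append {u : ℕ → A} {v : List A} (hv : InLang u v) (n : ℕ) :
    ∃ y : List A, y.length = n ∧ InLang u (v ++ y) := by
  obtain ⟨i, hi⟩ := hv
  exact ⟨_, length_factorAt u _ n, i, hi.append (occursAt_factorAt u _ n)⟩

lemma Recurrent.exists_append_left {u : ℕ → A} (hu : Recurrent u) {v : List A}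
    (hv : InLang u v) (n : ℕ) : ∃ y : List A, y.length = n ∧ InLang u (y ++ v) := by
  obtain ⟨i, hni, hi⟩ := hu v hv n
  refine ⟨_, length_factorAt u (i - n) n, i - n, (occursAt_factorAt u _ n).append ?_⟩
  rwa [length_factorAt, Nat.sub_add_cancel hni]

end InfiniteWord

section FixedPoint

variable {A : Type*} {φ : A → List A} {u : ℕ → A}

lemma occursAt_zero_applyM_factorAt (hφ : ∀ a, φ a ≠ []) (hfix : applyInf φ u = u) (j : ℕ) :
    OccursAt u (applyM φ (factorAt u 0 j)) 0 := by
  have hpre : ∀ {j j'}, j ≤ j' → applyM φ (factorAt u 0 j) <+: applyM φ (factorAt u 0 j') :=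
    fun h => (factorAt_prefix_factorAt u 0 h).flatMap φ
  have hlen : ∀ k, k < (applyM φ (factorAt u 0 (k + 1))).length := fun k =>
    (length_le_length_applyM hφ _).trans_lt' (by simp)
  have hu : ∀ k, u k = (applyM φ (factorAt u 0 (k + 1)))[k]'(hlen k) := by
    intro k
    rw [← getD_eq_getElem _ (u 0)]
    conv_lhs => rw [← hfix]
    simp [applyInf, applyM, factorAt, flatMap_map]
  apply ext_getElem (by simp)
  intro k hk _
  rw [getElem_factorAt, zero_add, hu k]
  rcases le_total j (k + 1) with h | h
  · exact ((hpre h).getElem _).symm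
  · exact (hpre h).getElem (hlen k)

lemma occursAt_zero_iterate_applyM (hφ : ∀ a, φ a ≠ []) (hfix : applyInf φ u = u)
    {q : List A} (hq : OccursAt u q 0) (n : ℕ) : OccursAt u ((applyM φ)^[n] q) 0 := by
  induction n with
  | zero => exact hq
  | succ n ih =>
    rw [iterate_succ_apply', ← ih]
    exact occursAt_zero_applyM_factorAt hφ hfix _

lemma occursAt_iterate_applyM_letter (hφ : ∀ a, φ a ≠ []) (hfix : applyInf φ u = u) (n j : ℕ) :
    OccursAt u ((applyM φ)^[n] [u j]) ((applyM φ)^[n] (factorAt u 0 j)).length := by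
  have hsplit : factorAt u 0 (j + 1) = factorAt u 0 j ++ [u j] := by
    rw [factorAt_add, zero_add, factorAt_one]
  have h₀ := occursAt_zero_iterate_applyM hφ hfix (occursAt_factorAt u 0 j) n
  have h₁ := occursAt_zero_iterate_applyM hφ hfix (occursAt_factorAt u 0 (j + 1)) n
  rw [hsplit, iterate_applyM_append, OccursAt, length_append, factorAt_add, h₀, zero_add] at h₁
  exact append_cancel_left h₁

lemma inLang_applyM_of_applyInf_eq (hφ : ∀ a, φ a ≠ []) (hfix : applyInf φ u = u) {v : List A}
    (hv : InLang u v) : InLang u (applyM φ v) := by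
  obtain ⟨m, hm⟩ := hv.exists_infix_factorAt_zero
  exact InLang.of_infix ⟨0, occursAt_zero_applyM_factorAt hφ hfix m⟩ (hm.flatMap φ)

end FixedPoint

lemma Nat.exists_mem_Icc_of_lt_of_le_add {s : ℕ → ℕ} {B : ℕ} (h0 : s 0 = 0)
    (hlt : ∀ j, s j < s (j + 1)) (hle : ∀ j, s (j + 1) ≤ s j + B) (i : ℕ) :
    ∃ j, s j ∈ Set.Icc i (i + B) := by
  induction i with
  | zero => exact ⟨0, by simp [h0]⟩
  | succ i ih =>
    obtain ⟨j, hij, hjB⟩ := ih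
    rcases hij.lt_or_eq with h | h
    · exact ⟨j, h, by omega⟩
    · exact ⟨j + 1, by have := hlt j; omega, by have := hle j; omega⟩

namespace PrimitiveM

variable {A : Type*} {φ : A → List A}

lemma exists_mem_iterate (h : PrimitiveM φ) : ∃ k, ∀ a b, b ∈ (applyM φ)^[k] [a] := by
  unfold PrimitiveM at h
  simpa only [powM_eq_iterate] using h

variable [Nontrivial A]

lemma exists_le_length_iterate (h : PrimitiveM φ) (N : ℕ) :
    ∃ n, ∀ a, N ≤ ((applyM φ)^[n] [a]).length := by
  obtain ⟨k, hk⟩ := h.exists_mem_iterate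
  obtain ⟨b, c, hbc⟩ := exists_pair_ne A
  have h2 : ∀ a, 2 ≤ ((applyM φ)^[k] [a]).length := fun a =>
    (by simpa using hbc : [b, c].Nodup).length_le_of_subset (by simp [hk])
  have hpow : ∀ s a, 2 ^ s ≤ ((applyM φ)^[k * s] [a]).length := by
    intro s
    induction s with
    | zero => simp
    | succ s ih =>
      intro a
      rw [Nat.mul_succ, iterate_add_apply, ← applyM_powM, pow_succ]
      refine le_trans ?_ (mul_length_le_length_applyM (c := 2 ^ s) (fun b => ?_) _)
      · exact Nat.mul_le_mul_left _ (h2 a)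
      · rw [← applyM_singleton (powM φ _), applyM_powM]
        exact ih b
  exact ⟨k * N, fun a => Nat.lt_two_pow_self.le.trans (hpow N a)⟩

lemma ne_nil (h : PrimitiveM φ) (a : A) : φ a ≠ [] := by
  intro ha
  obtain ⟨n, hn⟩ := h.exists_le_length_iterate 2
  cases n with
  | zero => simpa using hn a
  | succ n =>
    have := hn a
    rw [iterate_succ_apply, applyM_singleton, ha, iterate_fixed (applyM_nil φ)] at this
    simp at this

end PrimitiveM

def UniformlyRecurrent {A : Type*} (u : ℕ → A) : Prop :=
  ∀ v, InLang u v → ∃ L, ∀ i, v <:+: factorAt u i L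

section UniformlyRecurrent

variable {A : Type*} {u : ℕ → A}

lemma UniformlyRecurrent.recurrent (hu : UniformlyRecurrent u) : Recurrent u := by
  intro v hv N
  obtain ⟨L, hL⟩ := hu v hv
  exact exists_occursAt_of_infix_factorAt u (hL N)

theorem UniformlyRecurrent.closedUnderReversal (hu : UniformlyRecurrent u)
    (hpal : ∀ N, ∃ P, InLang u P ∧ P.reverse = P ∧ N ≤ P.length) : ClosedUnderReversal u := by
  intro v hv
  obtain ⟨L, hL⟩ := hu v hv
  obtain ⟨P, ⟨i, hi⟩, hPrev, hPlen⟩ := hpal L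
  have hP : factorAt u i L <+: P := by
    rw [← hi]
    exact factorAt_prefix_factorAt u i hPlen
  exact InLang.of_infix ⟨i, hi⟩ (hPrev ▸ ((hL i).trans hP.isInfix).reverse)

/-- `u = φᴺ(u₀)φᴺ(u₁)⋯` with blocks of length at most `B`, so every window of length `2B`
contains a whole block. -/
lemma exists_iterate_applyM_letter_infix_factorAt {φ : A → List A} (hφ : ∀ a, φ a ≠ [])
    (hfix : applyInf φ u = u) {N B : ℕ} (hB : ∀ a, ((applyM φ)^[N] [a]).length ≤ B) (i : ℕ) :
    ∃ j, (applyM φ)^[N] [u j] <:+: factorAt u i (2 * B) := by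
  have hstep : ∀ j, ((applyM φ)^[N] (factorAt u 0 (j + 1))).length
      = ((applyM φ)^[N] (factorAt u 0 j)).length + ((applyM φ)^[N] [u j]).length := by
    intro j
    rw [factorAt_add, zero_add, factorAt_one, iterate_applyM_append, length_append]
  obtain ⟨j, hij, hjB⟩ := Nat.exists_mem_Icc_of_lt_of_le_add
    (s := fun j => ((applyM φ)^[N] (factorAt u 0 j)).length) (B := B)
    (by simp [factorAt, iterate_fixed (applyM_nil φ)])
    (fun j => by
      rw [hstep]
      exact lt_add_of_pos_right _ (length_le_length_iterate_applyM hφ N [u j]))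
    (fun j => by rw [hstep]; exact Nat.add_le_add_left (hB (u j)) _) i
  refine ⟨j, ?_⟩
  rw [← occursAt_iterate_applyM_letter hφ hfix N j]
  exact factorAt_infix_factorAt u hij (by have := hB (u j); omega)

lemma PrimitiveM.exists_forall_infix_iterate [Nontrivial A] {φ : A → List A}
    (h : PrimitiveM φ) (hfix : applyInf φ u = u) {v : List A} (hv : InLang u v) :
    ∃ N, ∀ a, v <:+: (applyM φ)^[N] [a] := by
  obtain ⟨m, hvm⟩ := hv.exists_infix_factorAt_zero
  obtain ⟨k, hk⟩ := h.exists_mem_iterate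
  obtain ⟨n, hn⟩ := h.exists_le_length_iterate m
  have hpre : factorAt u 0 m <+: (applyM φ)^[n] [u 0] :=
    (occursAt_factorAt u 0 m).prefix_of_length_le
      (occursAt_zero_iterate_applyM h.ne_nil hfix (occursAt_factorAt u 0 1) n)
      (by simpa using hn (u 0))
  refine ⟨n + k, fun a => ?_⟩
  rw [iterate_add_apply]
  exact hvm.trans <| hpre.isInfix.trans <|
    ((singleton_infix_iff _ _).2 (hk a (u 0))).iterate_applyM φ n

theorem PrimitiveM.uniformlyRecurrent [Fintype A] [Nontrivial A] {φ : A → List A}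
    (h : PrimitiveM φ) (hfix : applyInf φ u = u) : UniformlyRecurrent u := by
  intro v hv
  obtain ⟨N, hN⟩ := h.exists_forall_infix_iterate hfix hv
  refine ⟨2 * ∑ a, ((applyM φ)^[N] [a]).length, fun i => ?_⟩
  obtain ⟨j, hj⟩ := exists_iterate_applyM_letter_infix_factorAt h.ne_nil hfix
    (fun a => Finset.single_le_sum (f := fun a => ((applyM φ)^[N] [a]).length)
      (fun _ _ => Nat.zero_le _) (Finset.mem_univ a)) i
  exact (hN (u j)).trans hj

end UniformlyRecurrent

section Conjugate

variable {A : Type*} {φ ψ : A → List A} {x : List A} {u : ℕ → A}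

lemma inLang_applyM_of_append_eq (hφ : ∀ a, φ a ≠ []) (hfix : applyInf φ u = u)
    (hconj : ∀ a, φ a ++ x = x ++ ψ a) {v : List A} (hv : InLang u v) :
    InLang u (applyM ψ v) := by
  obtain ⟨y, hy, hvy⟩ := hv.exists_append x.length
  obtain ⟨t, ht⟩ : x <+: applyM φ y := prefix_of_append_eq_append
    (applyM_append_eq_append hconj y) (hy ▸ length_le_length_applyM hφ y)
  refine (inLang_applyM_of_applyInf_eq hφ hfix hvy).of_infix ⟨x, t, ?_⟩
  rw [applyM_append, ← ht, ← append_assoc, applyM_append_eq_append hconj]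

lemma inLang_applyM_of_append_eq' (hφ : ∀ a, φ a ≠ []) (hfix : applyInf φ u = u)
    (hrec : Recurrent u) (hconj : ∀ a, ψ a ++ x = x ++ φ a) {v : List A} (hv : InLang u v) :
    InLang u (applyM ψ v) := by
  obtain ⟨y, hy, hyv⟩ := hrec.exists_append_left hv x.length
  obtain ⟨s, hs⟩ : x <:+ applyM φ y := suffix_of_append_eq_append
    (applyM_append_eq_append hconj y) (hy ▸ length_le_length_applyM hφ y)
  refine (inLang_applyM_of_applyInf_eq hφ hfix hyv).of_infix ⟨s, x, ?_⟩
  rw [append_assoc, applyM_append_eq_append hconj, ← append_assoc, hs, applyM_append]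

end Conjugate

namespace IsPretWithMarker

variable {A : Type*} [DecidableEq A] {ψ : A → List A} {w : List A}

lemma ne_nil (h : IsPretWithMarker ψ w) (a : A) : ψ a ≠ [] :=
  ne_nil_of_length_pos (Nat.pos_of_ne_zero (h.2.2 a).2.2)

lemma append_marker_eq (h : IsPretWithMarker ψ w) (a : A) : ψ a ++ w = w ++ (ψ a).reverse := by
  conv_lhs => rw [← (h.2.2 a).1]
  rw [reverse_append, h.2.1]

lemma reverse_applyM_append (h : IsPretWithMarker ψ w) (v : List A) :
    (applyM ψ v ++ w).reverse = applyM ψ v.reverse ++ w := by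
  induction v with
  | nil => simp [h.2.1]
  | cons a v ih => simp [reverse_append, ih, h.append_marker_eq]

lemma marker_prefix_applyM (h : IsPretWithMarker ψ w) {v : List A}
    (hv : w.length ≤ (applyM ψ v).length) : w <+: applyM ψ v := by
  refine prefix_of_append_eq_append (l := (applyM ψ v.reverse).reverse) ?_ hv
  rw [← reverse_reverse (applyM ψ v ++ w), h.reverse_applyM_append, reverse_append, h.2.1]

lemma inLang_applyM_append (h : IsPretWithMarker ψ w) {u : ℕ → A}
    (hψ : ∀ v, InLang u v → InLang u (applyM ψ v)) {P : List A} (hP : InLang u P) :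
    InLang u (applyM ψ P ++ w) := by
  obtain ⟨y, hy, hPy⟩ := hP.exists_append w.length
  have hwy : w <+: applyM ψ y := h.marker_prefix_applyM (hy ▸ length_le_length_applyM h.ne_nil y)
  refine (hψ _ hPy).of_infix ?_
  rw [applyM_append]
  exact ((prefix_append_right_inj _).2 hwy).isInfix

lemma exists_long_palindrome (h : IsPretWithMarker ψ w) {u : ℕ → A}
    (hψ : ∀ v, InLang u v → InLang u (applyM ψ v))
    (hgrow : ∀ N, ∃ n, N ≤ ((applyM ψ)^[n] [u 0]).length) (N : ℕ) :
    ∃ P, InLang u P ∧ P.reverse = P ∧ N ≤ P.length := by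
  let step : List A → List A := fun P => applyM ψ P ++ w
  have hiter : ∀ n, InLang u (step^[n] [u 0]) ∧ (step^[n] [u 0]).reverse = step^[n] [u 0] ∧
      (applyM ψ)^[n] [u 0] <+: step^[n] [u 0] := by
    intro n
    induction n with
    | zero => exact ⟨⟨0, by simp [OccursAt, factorAt_one]⟩, rfl, prefix_rfl⟩
    | succ n ih =>
      obtain ⟨hL, hR, hpre⟩ := ih
      rw [iterate_succ_apply', iterate_succ_apply']
      exact ⟨h.inLang_applyM_append hψ hL, by rw [h.reverse_applyM_append, hR],
        (hpre.flatMap ψ).trans (prefix_append _ _)⟩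
  obtain ⟨n, hn⟩ := hgrow N
  obtain ⟨hL, hR, hpre⟩ := hiter n
  exact ⟨_, hL, hR, hn.trans hpre.length_le⟩

end IsPretWithMarker

/-- A fixed point of a primitive binary morphism conjugated to a
morphism in Class `P_ret` has language closed under reversal. -/
theorem pret_binary_fixed_point_closed {φ : Fin 2 → List (Fin 2)}
    (hprim : PrimitiveM φ)
    (hconj : ∃ (ψ : Fin 2 → List (Fin 2)) (w x : List (Fin 2)),
      IsPretWithMarker ψ w ∧
        ((∀ a, ψ a ++ x = x ++ φ a) ∨ (∀ a, φ a ++ x = x ++ ψ a)))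
    (u : ℕ → Fin 2) (hfix : applyInf φ u = u) :
    ClosedUnderReversal u := by
  obtain ⟨ψ, w, x, hψ, hconj⟩ := hconj
  have hφ := hprim.ne_nil
  have hur := hprim.uniformlyRecurrent hfix
  have hperm : ∀ a, ψ a ~ φ a := by
    rcases hconj with h | h
    exacts [fun a => perm_of_append_eq_append (h a), fun a => (perm_of_append_eq_append (h a)).symm]
  have hclosed : ∀ v, InLang u v → InLang u (applyM ψ v) := by
    rcases hconj with h | h
    exacts [fun v => inLang_applyM_of_append_eq' hφ hfix hur.recurrent h,
      fun v => inLang_applyM_of_append_eq hφ hfix h]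
  refine hur.closedUnderReversal (hψ.exists_long_palindrome hclosed fun N => ?_)
  obtain ⟨n, hn⟩ := hprim.exists_le_length_iterate N
  exact ⟨n, (iterate_applyM_perm hperm n [u 0]).length_eq ▸ hn (u 0)⟩
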